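/- arXiv:math/0202159 — 7 statements merged into one kernel-verified Lean document; each statement's English description precedes it below -/
import Mathlib

section
/- For every positive integer n and real (or complex) t not equal to 0, -1, ..., -n, the partial fraction expansion ((t-1)(t-2)···(t-n))/(t(t+1)···(t+n)) = Σ_{k=0}^{n} (-1)^{n-k} · C(n+k,n) · C(n,k) / (t+k) holds. -/
/-!
Both sides are rational functions of `t` with simple poles at `t = -k`, `0 ≤ k ≤ n`, and a
numerator of degree `n`. Lagrange interpolation at these nodes (in its first barycentric form)
gives the expansion with residues `P(-k) / ∏_{j ≠ k} (j - k)`, where `P(t) = (t - 1)⋯(t - n)`;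
both products are ratios of factorials, and their quotient is `(-1)^(n-k) C(n+k,n) C(n,k)`.
-/

open Finset Polynomial Lagrange Nat

theorem Lagrange.eval_div_eval_nodal {F ι : Type*} [Field F] [DecidableEq ι] {s : Finset ι}
    {v : ι → F} (hvs : Set.InjOn v s) {f : F[X]} (hf : f.degree < #s) {x : F}
    (hx : ∀ i ∈ s, x ≠ v i) :
    f.eval x / (nodal s v).eval x = ∑ i ∈ s, nodalWeight s v i * f.eval (v i) / (x - v i) := by
  conv_lhs => rw [eq_interpolate hvs hf, eval_interpolate_not_at_node _ hx]
  rw [mul_div_cancel_left₀ _ (eval_nodal_not_at_node hx)]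
  exact sum_congr rfl fun i _ => by ring

section CommRing

variable {R : Type*} [CommRing R]

theorem factorial_mul_prod_Icc_add (k n : ℕ) :
    (k ! : R) * ∏ j ∈ Icc 1 n, ((k : R) + j) = (k + n)! := by
  induction n with
  | zero => simp
  | succ n ih =>
    rw [prod_Icc_succ_top (by omega), ← mul_assoc, ih, ← add_assoc, factorial_succ]
    push_cast
    ring

theorem prod_range_sub_self (k : ℕ) : ∏ j ∈ range k, ((j : R) - k) = (-1) ^ k * k ! := by
  induction k with
  | zero => simp
  | succ k ih =>
    rw [prod_range_succ']
    push_cast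
    simp_rw [add_sub_add_right_eq_sub, ih, factorial_succ]
    push_cast
    ring

theorem prod_erase_range_sub {k n : ℕ} (h : k ≤ n) :
    ∏ j ∈ (range (n + 1)).erase k, ((j : R) - k) = (-1) ^ k * k ! * (n - k)! := by
  induction n, h using Nat.le_induction with
  | base => rw [range_add_one, erase_insert (by simp), prod_range_sub_self]; simp
  | succ n hkn ih =>
    rw [range_add_one, erase_insert_of_ne (by omega), prod_insert (by simp), ih,
      Nat.sub_add_comm hkn, factorial_succ]
    push_cast [hkn]
    ring

end CommRing

theorem nodalWeight_neg_range_mul {K : Type*} [Field K] [CharZero K] {k n : ℕ} (h : k ≤ n) :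
    nodalWeight (range (n + 1)) (fun j : ℕ => -(j : K)) k * ∏ j ∈ Icc 1 n, (-(k : K) - j) =
      (-1) ^ (n - k) * (n + k).choose n * n.choose k := by
  have hk : (k ! : K) ≠ 0 := Nat.cast_ne_zero.mpr (factorial_ne_zero _)
  have hA : ∏ j ∈ Icc 1 n, (-(k : K) - j) = (-1) ^ n * ((n + k)! / k !) := by
    simp_rw [← neg_add', prod_neg, card_Icc, add_tsub_cancel_right, add_comm n k,
      ← factorial_mul_prod_Icc_add k n, mul_div_cancel_left₀ _ hk]
  rw [nodalWeight, prod_inv_distrib]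
  simp_rw [neg_sub_neg]
  rw [prod_erase_range_sub h, hA, cast_choose K h, cast_choose K (le_add_right n k)]
  obtain ⟨m, rfl⟩ := Nat.exists_eq_add_of_le h
  have hm : (m ! : K) ≠ 0 := Nat.cast_ne_zero.mpr (factorial_ne_zero _)
  have hkm : ((k + m)! : K) ≠ 0 := Nat.cast_ne_zero.mpr (factorial_ne_zero _)
  simp only [add_tsub_cancel_left, pow_add]
  field_simp

theorem partial_fraction_expansion_general (n : ℕ) (t : ℝ)
    (ht : ∀ k : ℕ, k ≤ n → t + k ≠ 0) :
    (∏ j ∈ Finset.Icc 1 n, (t - j)) / (∏ j ∈ Finset.range (n + 1), (t + j)) =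
      ∑ k ∈ Finset.range (n + 1),
        (-1 : ℝ) ^ (n - k) * ((n + k).choose n) * (n.choose k) / (t + k) := by
  have hnodes : Set.InjOn (fun j : ℕ => -(j : ℝ)) (range (n + 1)) :=
    fun a _ b _ hab => by simpa using hab
  have hdeg : (nodal (Icc 1 n) (fun j : ℕ => (j : ℝ))).degree < #(range (n + 1)) := by
    rw [degree_nodal, card_Icc, card_range]
    exact_mod_cast n.lt_succ_self
  have hpoles : ∀ k ∈ range (n + 1), t ≠ -(k : ℝ) := fun k hk hkt =>
    ht k (by simpa [Nat.lt_succ_iff] using hk) (by rw [hkt]; ring)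
  have hexpansion := eval_div_eval_nodal hnodes hdeg hpoles
  simp only [eval_nodal, sub_neg_eq_add] at hexpansion
  rw [hexpansion]
  refine sum_congr rfl fun k hk => ?_
  rw [nodalWeight_neg_range_mul (by simpa [Nat.lt_succ_iff] using hk)]

theorem partial_fraction_expansion (n : ℕ) (hn : 0 < n) (t : ℝ)
    (ht : ∀ k : ℕ, k ≤ n → t + k ≠ 0) :
    (∏ j ∈ Finset.Icc 1 n, (t - j)) / (∏ j ∈ Finset.range (n + 1), (t + j)) =
      ∑ k ∈ Finset.range (n + 1),
        (-1 : ℝ) ^ (n - k) * ((n + k).choose n) * (n.choose k) / (t + k) :=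
  partial_fraction_expansion_general n t ht
end

section
/- For every nonnegative integer n, if R_n(t) = (((t-1)···(t-n))/(t(t+1)···(t+n)))^2 is written in partial fractions as R_n(t) = Σ_{k=0}^{n} ( A_{2k}/(t+k)^2 + A_{1k}/(t+k) ), then A_{2k} = C(n+k,n)^2 · C(n,k)^2 for each k = 0, 1, ..., n. -/
open Finset Nat

lemma aux1 (n k : ℕ) : k ! * ∏ j ∈ Icc 1 n, (k + j) = (n + k)! := by
  induction n with
  | zero => simp
  | succ n ih =>
    rw [Finset.prod_Icc_succ_top (Nat.le_add_left 1 n), ← mul_assoc, ih]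
    rw [show n + 1 + k = (n + k) + 1 by omega, Nat.factorial_succ]
    ring

lemma aux2 (k : ℕ) : ∏ j ∈ range k, (k - j) = k ! := by
  induction k with
  | zero => simp
  | succ k ih =>
    rw [Finset.prod_range_succ', Nat.factorial_succ, ← ih]
    simp [Nat.succ_sub_succ]
    ring

lemma aux3 (k m : ℕ) : ∏ j ∈ Icc (k + 1) (k + m), (j - k) = m ! := by
  induction m with
  | zero => simp
  | succ m ih =>
    rw [show k + (m+1) = (k+m) + 1 by omega,
      Finset.prod_Icc_succ_top (by omega : k + 1 ≤ k + m + 1), ih,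
      Nat.factorial_succ, show k + m + 1 - k = m + 1 by omega]
    ring

noncomputable def R (n : ℕ) (t : ℝ) : ℝ :=
  ((∏ j ∈ Finset.Icc 1 n, (t - j)) / (∏ j ∈ Finset.range (n + 1), (t + j))) ^ 2

theorem partial_fraction_A2 (n : ℕ) (A2 A1 : ℕ → ℝ)
    (h : ∀ t : ℝ, (∀ k : ℕ, k ≤ n → t + k ≠ 0) →
      R n t = ∑ k ∈ Finset.range (n + 1), (A2 k / (t + k) ^ 2 + A1 k / (t + k))) :
    ∀ k : ℕ, k ≤ n → A2 k = ((n + k).choose n : ℝ) ^ 2 * (n.choose k : ℝ) ^ 2 := by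
  intro k hk
  set c : ℝ := -(k : ℝ) with hc
  set S : Finset ℕ := (Finset.range (n + 1)).erase k with hS
  have hmem : k ∈ Finset.range (n + 1) := Finset.mem_range.2 (Nat.lt_succ_of_le hk)
  have hsplit : ∀ t : ℝ, ∏ j ∈ Finset.range (n + 1), (t + j) = (t + k) * ∏ j ∈ S, (t + j) :=
    fun t => (Finset.mul_prod_erase _ _ hmem).symm
  have hioo : ∀ t ∈ Set.Ioo c (c + 1), ∀ j : ℕ, j ≤ n → t + j ≠ 0 := by
    intro t ht j hj
    rcases lt_trichotomy j k with hlt | heq | hgt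
    · have : (j : ℝ) + 1 ≤ (k : ℝ) := by exact_mod_cast Nat.succ_le_of_lt hlt
      have := ht.2
      intro hz
      simp only [hc] at this
      nlinarith
    · subst heq
      have := ht.1
      simp only [hc] at this
      intro hz; nlinarith
    · have : (k : ℝ) + 1 ≤ (j : ℝ) := by exact_mod_cast Nat.succ_le_of_lt hgt
      have := ht.1
      simp only [hc] at this
      intro hz; nlinarith
  have hDfac : ∀ j ∈ S, c + (j : ℝ) ≠ 0 := by
    intro j hj
    have hjk : j ≠ k := Finset.ne_of_mem_erase hj
    simp only [hc]
    intro habs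
    have : (j : ℝ) = (k : ℝ) := by linarith
    exact hjk (by exact_mod_cast this)
  have hD : (∏ j ∈ S, (c + (j : ℝ))) ≠ 0 := Finset.prod_ne_zero_iff.2 hDfac
  have hIooMem : Set.Ioo c (c + 1) ∈ nhdsWithin c (Set.Ioi c) :=
    Ioo_mem_nhdsGT_of_mem ⟨le_refl _, by linarith⟩
  set V : ℝ := ((∏ j ∈ Finset.Icc 1 n, (c - j)) / (∏ j ∈ S, (c + j))) ^ 2 with hV
  have t1 : Filter.Tendsto (fun t => (t + (k : ℝ)) ^ 2 * R n t) (nhdsWithin c (Set.Ioi c)) (nhds V) := by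
    have cont : Filter.Tendsto
        (fun t : ℝ => ((∏ j ∈ Finset.Icc 1 n, (t - j)) / (∏ j ∈ S, (t + j))) ^ 2)
        (nhds c) (nhds V) := by
      apply ContinuousAt.tendsto
      have c1 : Continuous fun t : ℝ => ∏ j ∈ Finset.Icc 1 n, (t - (j:ℝ)) :=
        continuous_finset_prod _ fun j _ => by fun_prop
      have c2 : Continuous fun t : ℝ => ∏ j ∈ S, (t + (j:ℝ)) :=
        continuous_finset_prod _ fun j _ => by fun_prop
      exact ((c1.continuousAt.div c2.continuousAt hD).pow 2)
    refine (cont.mono_left nhdsWithin_le_nhds).congr' ?_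
    filter_upwards [hIooMem] with t ht
    have h1 : t + (k : ℝ) ≠ 0 := hioo t ht k hk
    have h2 : (∏ j ∈ S, (t + (j:ℝ))) ≠ 0 := by
      refine Finset.prod_ne_zero_iff.2 fun j hj => ?_
      exact hioo t ht j (by have := Finset.mem_range.1 (Finset.mem_of_mem_erase hj); omega)
    show _ = (t + (k : ℝ)) ^ 2 * R n t
    rw [R, hsplit t]
    field_simp
  have t2 : Filter.Tendsto (fun t => (t + (k : ℝ)) ^ 2 * R n t) (nhdsWithin c (Set.Ioi c))
      (nhds (A2 k)) := by
    have hsum : Filter.Tendsto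
        (fun t : ℝ => ∑ j ∈ Finset.range (n + 1),
          (t + (k : ℝ)) ^ 2 * (A2 j / (t + j) ^ 2 + A1 j / (t + j)))
        (nhdsWithin c (Set.Ioi c))
        (nhds (∑ j ∈ Finset.range (n + 1), if j = k then A2 k else 0)) := by
      apply tendsto_finset_sum
      intro j hj
      rcases eq_or_ne j k with heq | hjk
      · subst heq
        simp only [if_pos rfl]
        have cont : Filter.Tendsto (fun t : ℝ => A2 j + A1 j * (t + j))
            (nhdsWithin c (Set.Ioi c)) (nhds (A2 j + A1 j * (c + j))) := by
          apply Filter.Tendsto.mono_left ?_ nhdsWithin_le_nhds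
          exact Continuous.tendsto (by fun_prop) c
        have hcz : c + (j : ℝ) = 0 := by simp [hc]
        rw [hcz, mul_zero, add_zero] at cont
        refine cont.congr' ?_
        filter_upwards [hIooMem] with t ht
        have h1 : t + (j : ℝ) ≠ 0 := hioo t ht j hk
        field_simp
      · simp only [if_neg hjk]
        have hjS : j ∈ S := Finset.mem_erase.2 ⟨hjk, hj⟩
        have hcj : c + (j : ℝ) ≠ 0 := hDfac j hjS
        have cont : ContinuousAt
            (fun t : ℝ => (t + (k : ℝ)) ^ 2 * (A2 j / (t + j) ^ 2 + A1 j / (t + j))) c := by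
          refine (((continuousAt_id.add continuousAt_const).pow 2)).mul
            (ContinuousAt.add
              (continuousAt_const.div ((continuousAt_id.add continuousAt_const).pow 2)
                (pow_ne_zero 2 hcj))
              (continuousAt_const.div (continuousAt_id.add continuousAt_const) hcj))
        have h0 : (c + (k : ℝ)) ^ 2 * (A2 j / (c + j) ^ 2 + A1 j / (c + j)) = 0 := by
          have : c + (k : ℝ) = 0 := by simp [hc]
          rw [this]
          ring
        have := cont.tendsto.mono_left (nhdsWithin_le_nhds (s := Set.Ioi c))
        rwa [h0] at this
    have hval : (∑ j ∈ Finset.range (n + 1), if j = k then A2 k else 0) = A2 k := by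
      rw [Finset.sum_ite_eq' (Finset.range (n+1)) k (fun _ => A2 k)]
      simp [hmem]
    rw [hval] at hsum
    refine hsum.congr' ?_
    filter_upwards [hIooMem] with t ht
    rw [h t (hioo t ht), Finset.mul_sum]
  have key : A2 k = V := tendsto_nhds_unique t2 t1
  -- Now compute V
  have hNum : (∏ j ∈ Finset.Icc 1 n, (c - (j : ℝ))) ^ 2
      = ((∏ j ∈ Finset.Icc 1 n, (k + j) : ℕ) : ℝ) ^ 2 := by
    push_cast
    rw [← Finset.prod_pow, ← Finset.prod_pow]
    refine Finset.prod_congr rfl fun j hj => ?_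
    simp only [hc]
    ring
  have hSeq : S = Finset.range k ∪ Finset.Icc (k + 1) n := by
    ext j
    simp only [hS, Finset.mem_erase, Finset.mem_range, Finset.mem_union, Finset.mem_Icc]
    omega
  have hdisj : Disjoint (Finset.range k) (Finset.Icc (k + 1) n) := by
    simp only [Finset.disjoint_left, Finset.mem_range, Finset.mem_Icc]
    omega
  have hDen : (∏ j ∈ S, (c + (j : ℝ))) ^ 2
      = ((Nat.factorial k : ℝ)) ^ 2 * ((Nat.factorial (n - k) : ℝ)) ^ 2 := by
    rw [hSeq, Finset.prod_union hdisj, mul_pow]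
    congr 1
    · rw [← Finset.prod_pow]
      have : ∀ j ∈ Finset.range k, (c + (j : ℝ)) ^ 2 = (((k - j : ℕ) : ℝ)) ^ 2 := by
        intro j hj
        have hj' : j < k := Finset.mem_range.1 hj
        rw [Nat.cast_sub hj'.le]
        simp only [hc]
        ring
      rw [Finset.prod_congr rfl this, Finset.prod_pow, ← Nat.cast_prod, aux2]
    · rw [← Finset.prod_pow]
      have : ∀ j ∈ Finset.Icc (k + 1) n, (c + (j : ℝ)) ^ 2 = (((j - k : ℕ) : ℝ)) ^ 2 := by
        intro j hj
        have hj' : k + 1 ≤ j := (Finset.mem_Icc.1 hj).1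
        rw [Nat.cast_sub (by omega)]
        simp only [hc]
        ring
      rw [Finset.prod_congr rfl this, Finset.prod_pow, ← Nat.cast_prod,
        show Finset.Icc (k + 1) n = Finset.Icc (k + 1) (k + (n - k)) by rw [Nat.add_sub_cancel' hk],
        aux3]
  -- natural number identity
  have hC1 : (n + k).choose n * Nat.factorial n * Nat.factorial k = Nat.factorial (n + k) := by
    have := Nat.choose_mul_factorial_mul_factorial (Nat.le_add_right n k)
    rwa [Nat.add_sub_cancel_left] at this
  have hC2 : n.choose k * Nat.factorial k * Nat.factorial (n - k) = Nat.factorial n :=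
    Nat.choose_mul_factorial_mul_factorial hk
  have hPeq : (∏ j ∈ Finset.Icc 1 n, (k + j))
      = (n + k).choose n * n.choose k * Nat.factorial k * Nat.factorial (n - k) := by
    apply Nat.eq_of_mul_eq_mul_left (Nat.factorial_pos k)
    rw [aux1]
    calc Nat.factorial (n + k)
        = (n + k).choose n * Nat.factorial n * Nat.factorial k := hC1.symm
      _ = (n + k).choose n * (n.choose k * Nat.factorial k * Nat.factorial (n - k))
            * Nat.factorial k := by rw [hC2]
      _ = _ := by ring
  rw [key, hV, div_pow, hNum, hDen, hPeq]
  have hk0 : (Nat.factorial k : ℝ) ≠ 0 := Nat.cast_ne_zero.2 (Nat.factorial_ne_zero k)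
  have hnk0 : (Nat.factorial (n - k) : ℝ) ≠ 0 := Nat.cast_ne_zero.2 (Nat.factorial_ne_zero _)
  push_cast
  field_simp
end

section
/- For every nonnegative integer n, with R_n(t) = (((t-1)···(t-n))/(t(t+1)···(t+n)))^2 and D_n the least common multiple of 1, 2, ..., n (D_0 = 1), each simple-pole coefficient A_{1k} of the partial fraction expansion of R_n satisfies D_n · A_{1k} ∈ ℤ. -/
def D (n : ℕ) : ℕ := (Finset.Icc 1 n).lcm id

open Nat Finset

/- ### Number-theoretic facts -/

lemma D_ne_zero (n : ℕ) : D n ≠ 0 := by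
  intro h
  rw [D, Finset.lcm_eq_zero_iff] at h
  obtain ⟨m, hm, hm0⟩ := h
  simp only [id_eq] at hm0
  subst hm0
  simp at hm

lemma dvd_D {n m : ℕ} (h1 : 1 ≤ m) (h2 : m ≤ n) : m ∣ D n :=
  Finset.dvd_lcm (by simp [h1, h2])

lemma kummer {p e n k : ℕ} (hp : p.Prime) (he : 1 ≤ e) (hk : k < p ^ e) (hn : n < p ^ e)
    (h : p ^ e ≤ n + k) : p ∣ (n + k).choose k := by
  have hb : log p (n + k) < e + 1 := by
    apply Nat.log_lt_of_lt_pow (by omega)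
    calc n + k < p ^ e + p ^ e := by omega
    _ = 2 * p ^ e := by ring
    _ ≤ p * p ^ e := by have := hp.two_le; nlinarith [pow_pos hp.pos e]
    _ = p ^ (e + 1) := by ring
  have hm := hp.emultiplicity_choose' (n := n) (k := k) hb
  have hcard : 1 ≤ #(filter (fun i => p ^ i ≤ k % p ^ i + n % p ^ i) (Ico 1 (e+1))) := by
    rw [Finset.one_le_card]
    refine ⟨e, Finset.mem_filter.2 ⟨Finset.mem_Ico.2 ⟨he, by omega⟩, ?_⟩⟩
    rw [Nat.mod_eq_of_lt hk, Nat.mod_eq_of_lt hn]; omega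
  have h1 : (1 : ℕ∞) ≤ emultiplicity p ((n + k).choose k) := by
    rw [hm]; exact_mod_cast hcard
  simpa using pow_dvd_of_le_emultiplicity h1

lemma key_dvd {n k i : ℕ} (hk : k ≤ n) (hi1 : 1 ≤ i) (hin : i ≤ n) :
    (k + i) ∣ D n * (n + k).choose k := by
  have hc0 : (n + k).choose k ≠ 0 := Nat.choose_pos (by omega) |>.ne'
  have hD0 := D_ne_zero n
  have hki : k + i ≠ 0 := by omega
  rw [← Nat.factorization_le_iff_dvd hki (by positivity)]
  rw [Finsupp.le_def]
  intro p
  by_cases hp : p.Prime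
  · set e := (k + i).factorization p with hee
    have hpe : p ^ e ∣ k + i := Nat.ordProj_dvd _ _
    rw [Nat.factorization_mul hD0 hc0]
    simp only [Finsupp.coe_add, Pi.add_apply]
    by_cases hle : p ^ e ≤ n
    · have : p ^ e ∣ D n := dvd_D (Nat.one_le_pow _ _ hp.pos) hle
      have := (hp.pow_dvd_iff_le_factorization hD0).1 this
      omega
    · push_neg at hle
      rcases Nat.eq_zero_or_pos e with he0 | he1
      · omega
      have hpek : k + i = p ^ e := by
        have h1 : p ^ e ≤ k + i := Nat.le_of_dvd (by omega) hpe
        have h2 : k + i < 2 * p ^ e := by omega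
        obtain ⟨c, hc⟩ := hpe
        have hc2 : c < 2 := by nlinarith [pow_pos (Nat.Prime.pos hp) e]
        interval_cases c <;> omega
      have hprev : p ^ (e - 1) ∣ D n := by
        apply dvd_D (Nat.one_le_pow _ _ hp.pos)
        have : p * p ^ (e - 1) = p ^ e := by
          rw [← _root_.pow_succ']; congr 1; omega
        have h2 := hp.two_le
        nlinarith [pow_pos hp.pos (e-1)]
      have hDf : e - 1 ≤ (D n).factorization p :=
        (hp.pow_dvd_iff_le_factorization hD0).1 hprev
      have hpc : p ∣ (n + k).choose k := by
        apply kummer hp he1 (by omega) (by omega) (by omega)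
      have hcf : 1 ≤ ((n + k).choose k).factorization p :=
        (hp.dvd_iff_one_le_factorization hc0).1 hpc
      omega
  · simp [Nat.factorization_eq_zero_of_not_prime _ hp]

/- ### Combinatorial product identities -/

lemma prod_Icc_mul_factorial (n k : ℕ) :
    (∏ j ∈ Icc 1 n, (k + j)) * k.factorial = (k + n).factorial := by
  induction n with
  | zero => simp
  | succ n ih =>
      rw [Finset.prod_Icc_succ_top (by omega), mul_right_comm, ih]
      rw [← Nat.add_assoc, Nat.factorial_succ, Nat.mul_comm]

lemma a_eq (n k : ℕ) (hk : k ≤ n) :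
    ∏ j ∈ Icc 1 n, (k + j) =
      ((n + k).choose k * n.choose k) * (k.factorial * (n - k).factorial) := by
  have h1 := prod_Icc_mul_factorial n k
  have h2 : (n + k).choose k * k.factorial * n.factorial = (n + k).factorial := by
    have := Nat.choose_mul_factorial_mul_factorial (show k ≤ n + k by omega)
    simpa using this
  have h3 : n.choose k * k.factorial * (n - k).factorial = n.factorial :=
    Nat.choose_mul_factorial_mul_factorial hk
  apply Nat.eq_of_mul_eq_mul_right (Nat.factorial_pos k)
  rw [h1]
  have : (n + k).choose k * n.choose k * (k.factorial * (n - k).factorial) * k.factorial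
      = ((n + k).choose k * k.factorial) * (n.choose k * k.factorial * (n - k).factorial) := by
    ring
  rw [this, h3, Nat.add_comm k n, ← h2]

lemma prod_range_sub (k : ℕ) : ∏ j ∈ range k, (k - j) = k.factorial := by
  have h := Finset.prod_range_reflect (fun j => j + 1) k
  rw [← Finset.prod_range_add_one_eq_factorial, ← h]
  apply Finset.prod_congr rfl
  intro j hj
  rw [Finset.mem_range] at hj
  omega

lemma prod_Icc_sub (k n : ℕ) (hk : k ≤ n) :
    ∏ j ∈ Icc (k + 1) n, (j - k) = (n - k).factorial := by
  induction n, hk using Nat.le_induction with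
  | base => simp
  | succ n hk ih =>
      rw [Finset.prod_Icc_succ_top (by omega), ih]
      have h1 : n + 1 - k = (n - k) + 1 := by omega
      rw [h1, Nat.factorial_succ, Nat.mul_comm]

/- ### The polynomial pieces -/

noncomputable def Nf (n : ℕ) (t : ℝ) : ℝ := ∏ j ∈ Finset.Icc 1 n, (t - j)

noncomputable def Bf (n c : ℕ) (t : ℝ) : ℝ := ∏ j ∈ (Finset.range (n + 1)).erase c, (t + j)

theorem partial_fraction_A1_denominator (n : ℕ) (A2 A1 : ℕ → ℝ)
    (h : ∀ t : ℝ, (∀ k : ℕ, k ≤ n → t + k ≠ 0) →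
      R n t = ∑ k ∈ Finset.range (n + 1), (A2 k / (t + k) ^ 2 + A1 k / (t + k))) :
    ∀ k : ℕ, k ≤ n → ∃ m : ℤ, (D n : ℝ) * A1 k = m := by
  classical
  -- Step A: polynomial identity everywhere
  have hA : ∀ t : ℝ, (Nf n t) ^ 2
      = ∑ c ∈ range (n + 1), (A2 c + A1 c * (t + c)) * (Bf n c t) ^ 2 := by
    have hdense : Dense {t : ℝ | ∀ m : ℕ, m ≤ n → t + m ≠ 0} := by
      have hfin : Set.Finite {t : ℝ | ∃ m : ℕ, m ≤ n ∧ t + m = 0} := by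
        apply Set.Finite.subset (Set.Finite.image (fun m : ℕ => -(m : ℝ)) (Set.finite_Iic n))
        rintro t ⟨m, hm, hm0⟩
        rw [Set.mem_image]
        exact ⟨m, hm, show -(m:ℝ) = t by linarith⟩
      have hd := (hfin.countable).dense_compl ℝ
      refine hd.mono ?_
      intro t ht
      simp only [Set.mem_compl_iff, Set.mem_setOf_eq, not_exists, not_and] at ht
      intro m hm
      exact ht m hm
    have heqon : Set.EqOn (fun t => (Nf n t) ^ 2)
        (fun t => ∑ c ∈ range (n + 1), (A2 c + A1 c * (t + c)) * (Bf n c t) ^ 2)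
        {t : ℝ | ∀ m : ℕ, m ≤ n → t + m ≠ 0} := by
      intro t ht
      simp only [Set.mem_setOf_eq] at ht
      have hR := h t ht
      have hPi0 : (∏ j ∈ range (n + 1), (t + (j : ℝ))) ≠ 0 := by
        rw [Finset.prod_ne_zero_iff]
        intro j hj
        exact ht j (Finset.mem_range_succ_iff.mp hj)
      show (Nf n t) ^ 2 = _
      have hRls : (Nf n t) ^ 2 = R n t * (∏ j ∈ range (n + 1), (t + (j : ℝ))) ^ 2 := by
        rw [R, Nf, div_pow, div_mul_cancel₀]
        positivity
      rw [hRls, hR, Finset.sum_mul]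
      apply Finset.sum_congr rfl
      intro c hc
      have hc0 : t + (c : ℝ) ≠ 0 := ht c (by simpa using Finset.mem_range_succ_iff.mp hc)
      have hsplit : (t + (c : ℝ)) * Bf n c t = ∏ j ∈ range (n + 1), (t + (j : ℝ)) := by
        rw [Bf]
        exact Finset.mul_prod_erase _ (fun j : ℕ => t + (j : ℝ)) hc
      rw [← hsplit]
      field_simp
    have hcont1 : Continuous (fun t : ℝ => (Nf n t) ^ 2) := by
      apply Continuous.pow
      apply continuous_finset_prod
      intro j _
      exact continuous_id.sub continuous_const
    have hcont2 : Continuous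
        (fun t : ℝ => ∑ c ∈ range (n + 1), (A2 c + A1 c * (t + c)) * (Bf n c t) ^ 2) := by
      apply continuous_finset_sum
      intro c _
      apply Continuous.mul
      · exact continuous_const.add (continuous_const.mul (continuous_id.add continuous_const))
      · apply Continuous.pow
        apply continuous_finset_prod
        intro j _
        exact continuous_id.add continuous_const
    have := Continuous.ext_on hdense hcont1 hcont2 heqon
    exact fun t => congrFun this t
  -- Step B: evaluate values and derivatives at x = -k
  intro k hk
  set x : ℝ := -(k : ℝ) with hx
  have hxk : x + (k : ℝ) = 0 := by simp [hx]
  -- derivatives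
  set Nd : ℝ := ∑ i ∈ Icc 1 n, ∏ j ∈ (Icc 1 n).erase i, (x - (j : ℝ)) with hNdDef
  set Bd : ℝ := ∑ i ∈ ((range (n + 1)).erase k),
      ∏ j ∈ ((range (n + 1)).erase k).erase i, (x + (j : ℝ)) with hBdDef
  have hNder : HasDerivAt (Nf n) Nd x := by
    have := HasDerivAt.fun_finsetProd (u := Icc 1 n) (f := fun j (t : ℝ) => t - (j : ℝ))
      (f' := fun _ => 1) (x := x) (fun i _ => (hasDerivAt_id x).sub_const _)
    show HasDerivAt (fun t => ∏ j ∈ Icc 1 n, (t - (j : ℝ))) _ x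
    simpa [Nf, hNdDef] using this
  have hBder : HasDerivAt (Bf n k) Bd x := by
    have := HasDerivAt.fun_finsetProd (u := (range (n + 1)).erase k)
      (f := fun j (t : ℝ) => t + (j : ℝ)) (f' := fun _ => 1) (x := x)
      (fun i _ => (hasDerivAt_id x).add_const _)
    show HasDerivAt (fun t => ∏ j ∈ (range (n + 1)).erase k, (t + (j : ℝ))) _ x
    simpa [Bf, hBdDef] using this
  have hTermDer : ∀ c ∈ range (n + 1),
      HasDerivAt (fun t => (A2 c + A1 c * (t + c)) * (Bf n c t) ^ 2)
        (A1 c * (Bf n c x) ^ 2 + (A2 c + A1 c * (x + c)) * (2 * Bf n c x *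
          (∑ i ∈ ((range (n + 1)).erase c),
            ∏ j ∈ ((range (n + 1)).erase c).erase i, (x + (j : ℝ))))) x := by
    intro c _
    have h1 : HasDerivAt (fun t : ℝ => A2 c + A1 c * (t + c)) (A1 c) x := by
      simpa using (((hasDerivAt_id x).add_const ((c : ℝ))).const_mul (A1 c)).const_add (A2 c)
    have hBc : HasDerivAt (Bf n c)
        (∑ i ∈ ((range (n + 1)).erase c),
          ∏ j ∈ ((range (n + 1)).erase c).erase i, (x + (j : ℝ))) x := by
      have := HasDerivAt.fun_finsetProd (u := (range (n + 1)).erase c)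
        (f := fun j (t : ℝ) => t + (j : ℝ)) (f' := fun _ => 1) (x := x)
        (fun i _ => (hasDerivAt_id x).add_const _)
      show HasDerivAt (fun t => ∏ j ∈ (range (n + 1)).erase c, (t + (j : ℝ))) _ x
      simpa [Bf] using this
    have h2 := hBc.fun_pow 2
    have : HasDerivAt (fun t => (A2 c + A1 c * (t + c)) * (Bf n c t) ^ 2) _ x := h1.mul h2
    convert this using 1
    simp only [Bf]
    try ring
  have hFder := HasDerivAt.fun_sum hTermDer
  have hGder : HasDerivAt (fun t => (Nf n t) ^ 2) (2 * Nf n x * Nd) x := by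
    simpa using hNder.fun_pow 2
  have hfun : (fun t => (Nf n t) ^ 2)
      = (fun t => ∑ c ∈ range (n + 1), (A2 c + A1 c * (t + c)) * (Bf n c t) ^ 2) :=
    funext hA
  rw [hfun] at hGder
  have hE2 := hGder.unique hFder
  have hE1 := hA x
  -- vanishing of other terms
  have hBzero : ∀ c ∈ range (n + 1), c ≠ k → Bf n c x = 0 := by
    intro c hc hck
    apply Finset.prod_eq_zero (i := k)
    · exact Finset.mem_erase.2 ⟨Ne.symm hck, Finset.mem_range_succ_iff.2 hk⟩
    · exact hxk
  have hkmem : k ∈ range (n + 1) := Finset.mem_range_succ_iff.2 hk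
  rw [Finset.sum_eq_single k (fun b hb hbk => by rw [hBzero b hb hbk]; ring)
    (fun hk' => absurd hkmem hk')] at hE1
  rw [Finset.sum_eq_single k (fun b hb hbk => by rw [hBzero b hb hbk]; ring)
    (fun hk' => absurd hkmem hk')] at hE2
  rw [hxk] at hE1 hE2
  -- now hE1 : Nf n x ^ 2 = (A2 k + A1 k * 0) * Bf n k x ^ 2
  -- hE2 : 2 * Nf n x * Nd = A1 k * Bf n k x ^ 2 + (A2 k + A1 k * 0) * (2 * Bf n k x * Bd)
  have hbne : Bf n k x ≠ 0 := by
    rw [Bf, Finset.prod_ne_zero_iff]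
    intro j hj
    have hjk : j ≠ k := (Finset.mem_erase.1 hj).1
    intro hc
    apply hjk
    have : (j : ℝ) = (k : ℝ) := by rw [hx] at hc; linarith
    exact_mod_cast this
  -- closed forms
  set c1 : ℕ := (n + k).choose k * n.choose k with hc1
  have hNsq : (Nf n x) ^ 2 = ((∏ j ∈ Icc 1 n, (k + j) : ℕ) : ℝ) ^ 2 := by
    rw [Nf, ← Finset.prod_pow, Nat.cast_prod, ← Finset.prod_pow]
    apply Finset.prod_congr rfl
    intro j _
    have : x - (j : ℝ) = -((k : ℝ) + j) := by rw [hx]; ring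
    rw [this]
    push_cast
    ring
  have hbsq : (Bf n k x) ^ 2 = ((k.factorial * (n - k).factorial : ℕ) : ℝ) ^ 2 := by
    have hsplit : (range (n + 1)).erase k = range k ∪ Icc (k + 1) n := by
      ext j
      simp only [Finset.mem_erase, Finset.mem_range, Finset.mem_union, Finset.mem_Icc]
      omega
    have hdisj : Disjoint (range k) (Icc (k + 1) n) := by
      rw [Finset.disjoint_left]
      intro j hj hj'
      simp only [Finset.mem_range] at hj
      simp only [Finset.mem_Icc] at hj'
      omega
    have hb1 : ∏ j ∈ range k, (x + (j : ℝ)) = (-1) ^ k * (k.factorial : ℝ) := by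
      have : ∀ j ∈ range k, x + (j : ℝ) = (-1) * (((k - j : ℕ) : ℝ)) := by
        intro j hj
        rw [Finset.mem_range] at hj
        rw [hx, Nat.cast_sub hj.le]
        ring
      rw [Finset.prod_congr rfl this, Finset.prod_mul_distrib, Finset.prod_const,
        Finset.card_range, ← Nat.cast_prod, prod_range_sub]
    have hb2 : ∏ j ∈ Icc (k + 1) n, (x + (j : ℝ)) = ((n - k).factorial : ℝ) := by
      have : ∀ j ∈ Icc (k + 1) n, x + (j : ℝ) = (((j - k : ℕ) : ℝ)) := by
        intro j hj
        rw [Finset.mem_Icc] at hj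
        rw [hx, Nat.cast_sub (by omega)]
        ring
      rw [Finset.prod_congr rfl this, ← Nat.cast_prod, prod_Icc_sub k n hk]
    have : Bf n k x = (-1) ^ k * (k.factorial : ℝ) * ((n - k).factorial : ℝ) := by
      rw [Bf, hsplit, Finset.prod_union hdisj, hb1, hb2]
    have h2 : ((-1:ℝ)^k)^2 = 1 := by
      rw [← pow_mul, mul_comm, pow_mul]
      norm_num
    calc (Bf n k x) ^ 2
        = (((-1:ℝ)^k)^2) * ((k.factorial:ℝ) * ((n-k).factorial:ℝ))^2 := by rw [this]; ring
      _ = ((k.factorial * (n - k).factorial : ℕ) : ℝ) ^ 2 := by rw [h2]; push_cast; ring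
  have hNc1 : (Nf n x) ^ 2 = (c1 : ℝ) ^ 2 * (Bf n k x) ^ 2 := by
    rw [hNsq, hbsq, a_eq n k hk, hc1]
    push_cast
    ring
  have hA2 : A2 k = (c1 : ℝ) ^ 2 := by
    have h1 : (A2 k + A1 k * 0) * Bf n k x ^ 2 = (c1 : ℝ) ^ 2 * Bf n k x ^ 2 := by
      rw [← hE1, hNc1]
    have := mul_right_cancel₀ (pow_ne_zero 2 hbne) h1
    linarith
  -- expansions of derivative sums
  have hxi_ne : ∀ i ∈ Icc 1 n, x - (i : ℝ) ≠ 0 := by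
    intro i hi
    rw [Finset.mem_Icc] at hi
    rw [hx]
    intro hc
    have : (k : ℝ) + i = 0 := by linarith
    have : ((k + i : ℕ) : ℝ) = 0 := by push_cast; linarith
    have : k + i = 0 := by exact_mod_cast this
    omega
  have hxu_ne : ∀ i ∈ (range (n + 1)).erase k, x + (i : ℝ) ≠ 0 := by
    intro i hi
    have hik : i ≠ k := (Finset.mem_erase.1 hi).1
    rw [hx]
    intro hc
    apply hik
    have : (i : ℝ) = (k : ℝ) := by linarith
    exact_mod_cast this
  have hNd : Nf n x * Nd = ∑ i ∈ Icc 1 n, (Nf n x) ^ 2 / (x - (i : ℝ)) := by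
    rw [hNdDef, Finset.mul_sum]
    apply Finset.sum_congr rfl
    intro i hi
    have hmul : (x - (i : ℝ)) * ∏ j ∈ (Icc 1 n).erase i, (x - (j : ℝ)) = Nf n x := by
      rw [Nf]
      exact Finset.mul_prod_erase _ (fun j : ℕ => x - (j : ℝ)) hi
    rw [eq_div_iff (hxi_ne i hi), ← hmul]
    ring
  have hBd : Bf n k x * Bd = ∑ i ∈ (range (n + 1)).erase k, (Bf n k x) ^ 2 / (x + (i : ℝ)) := by
    rw [hBdDef, Finset.mul_sum]
    apply Finset.sum_congr rfl
    intro i hi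
    have hmul : (x + (i : ℝ)) * ∏ j ∈ ((range (n + 1)).erase k).erase i, (x + (j : ℝ))
        = Bf n k x := by
      rw [Bf]
      exact Finset.mul_prod_erase _ (fun j : ℕ => x + (j : ℝ)) hi
    rw [eq_div_iff (hxu_ne i hi), ← hmul]
    ring
  -- solve for A1 k
  have hA1 : A1 k = (∑ i ∈ Icc 1 n, 2 * (c1 : ℝ) ^ 2 / (x - (i : ℝ)))
      - ∑ i ∈ (range (n + 1)).erase k, 2 * (c1 : ℝ) ^ 2 / (x + (i : ℝ)) := by
    apply mul_right_cancel₀ (pow_ne_zero 2 hbne)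
    have hstep : A1 k * Bf n k x ^ 2
        = 2 * (Nf n x * Nd) - (c1 : ℝ) ^ 2 * (2 * (Bf n k x * Bd)) := by
      rw [← hA2]; linarith [hE2]
    rw [hstep, hNd, hBd, Finset.mul_sum, Finset.mul_sum, Finset.mul_sum, sub_mul,
      Finset.sum_mul, Finset.sum_mul]
    congr 1
    · apply Finset.sum_congr rfl
      intro i hi
      rw [hNc1]
      field_simp
    · apply Finset.sum_congr rfl
      intro i hi
      field_simp
  -- integrality of each term
  have hterm1 : ∀ i ∈ Icc 1 n,
      (D n : ℝ) * (2 * (c1 : ℝ) ^ 2 / (x - (i : ℝ)))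
        = (((-2) * (((D n : ℤ) * (c1 : ℤ) ^ 2) / ((k : ℤ) + i)) : ℤ) : ℝ) := by
    intro i hi
    rw [Finset.mem_Icc] at hi
    have hch : (n + k).choose k ∣ c1 ^ 2 :=
      ⟨(n + k).choose k * (n.choose k) ^ 2, by rw [hc1]; ring⟩
    have hN : (k + i) ∣ D n * c1 ^ 2 :=
      dvd_trans (key_dvd hk hi.1 hi.2) (Nat.mul_dvd_mul_left _ hch)
    have hdvd : ((k : ℤ) + i) ∣ ((D n : ℤ) * (c1 : ℤ) ^ 2) := by
      have := Int.natCast_dvd_natCast.2 hN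
      push_cast at this
      exact this
    have hne : (k : ℝ) + i ≠ 0 := by
      have h1 : (1 : ℝ) ≤ (i : ℝ) := by exact_mod_cast hi.1
      have h2 : (0 : ℝ) ≤ (k : ℝ) := Nat.cast_nonneg k
      linarith
    have hxi : x - (i : ℝ) = -((k : ℝ) + i) := by rw [hx]; ring
    rw [Int.cast_mul, Int.cast_div_charZero hdvd, hxi, div_neg]
    push_cast
    ring
  have hterm2 : ∀ i ∈ (range (n + 1)).erase k,
      (D n : ℝ) * (2 * (c1 : ℝ) ^ 2 / (x + (i : ℝ)))
        = ((2 * (((D n : ℤ) * (c1 : ℤ) ^ 2) / ((i : ℤ) - k)) : ℤ) : ℝ) := by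
    intro i hi
    have hik : i ≠ k := (Finset.mem_erase.1 hi).1
    have hin : i < n + 1 := Finset.mem_range.1 (Finset.mem_erase.1 hi).2
    have habs : ((i : ℤ) - k).natAbs ∣ D n := by
      apply dvd_D
      · omega
      · omega
    have hdvd0 : ((i : ℤ) - k) ∣ (D n : ℤ) := by
      rw [← Int.natAbs_dvd]
      exact_mod_cast habs
    have hdvd : ((i : ℤ) - k) ∣ ((D n : ℤ) * (c1 : ℤ) ^ 2) := hdvd0.mul_right _
    have hne : (i : ℝ) - k ≠ 0 := by
      intro hc
      apply hik
      have : (i : ℝ) = (k : ℝ) := by linarith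
      exact_mod_cast this
    rw [Int.cast_mul, Int.cast_div_charZero hdvd]
    have hxi : x + (i : ℝ) = (i : ℝ) - k := by rw [hx]; ring
    rw [hxi]
    push_cast
    field_simp
  refine ⟨(∑ i ∈ Icc 1 n, (-2) * (((D n : ℤ) * (c1 : ℤ) ^ 2) / ((k : ℤ) + i)))
      - ∑ i ∈ (range (n + 1)).erase k, 2 * (((D n : ℤ) * (c1 : ℤ) ^ 2) / ((i : ℤ) - k)), ?_⟩
  rw [hA1, mul_sub, Finset.mul_sum, Finset.mul_sum]
  rw [Int.cast_sub, Int.cast_sum, Int.cast_sum]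
  congr 1
  · exact Finset.sum_congr rfl hterm1
  · exact Finset.sum_congr rfl hterm2
end

section
/- With R_1(t) = ((t-1)/(t(t+1)))^2 = 1/t^2 + 4/(t+1)^2 - 4/t + 4/(t+1), the series F_1 := -Σ_{t=1}^∞ R_1'(t) equals 10ζ(3) - 12. -/
noncomputable def zeta3 : ℝ := ∑' k : ℕ, 1 / ((k : ℝ) + 1) ^ 3

lemma deriv_R1 (n : ℕ) :
    deriv (fun x : ℝ => ((x - 1) / (x * (x + 1))) ^ 2) ((n : ℝ) + 1)
      = -(2 / ((n:ℝ)+1)^3 + 8 / ((n:ℝ)+2)^3 - 4 / ((n:ℝ)+1)^2 + 4 / ((n:ℝ)+2)^2) := by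
  set x : ℝ := (n : ℝ) + 1 with hxdef
  have hx : x ≠ 0 := by positivity
  have hx1 : x + 1 ≠ 0 := by positivity
  have hv0 : x * (x + 1) ≠ 0 := mul_ne_zero hx hx1
  have hu : HasDerivAt (fun x : ℝ => x - 1) 1 x := (hasDerivAt_id x).sub_const 1
  have hv : HasDerivAt (fun x : ℝ => x * (x + 1)) (1 * (x + 1) + x * 1) x :=
    (hasDerivAt_id x).mul ((hasDerivAt_id x).add_const 1)
  have hq := hu.div hv hv0
  have hf := hq.pow 2
  rw [HasDerivAt.deriv (f := fun x : ℝ => ((x - 1) / (x * (x + 1))) ^ 2) hf]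
  have hx2 : (n:ℝ) + 2 = x + 1 := by rw [hxdef]; ring
  rw [hx2]
  simp only [Pi.div_apply, Nat.reduceSub, pow_one, Nat.cast_ofNat]
  field_simp
  ring

theorem F_one_eval :
    -∑' t : ℕ, deriv (fun x : ℝ => ((x - 1) / (x * (x + 1))) ^ 2) (t + 1)
      = 10 * zeta3 - 12 := by
  have h3 : Summable (fun n : ℕ => 1 / ((n:ℝ)+1)^3) := by
    have := Real.summable_one_div_nat_pow.mpr (by norm_num : 1 < 3)
    simpa using (summable_nat_add_iff 1).mpr this
  have h3' : Summable (fun n : ℕ => 1 / ((n:ℝ)+2)^3) := by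
    have := Real.summable_one_div_nat_pow.mpr (by norm_num : 1 < 3)
    have h := (summable_nat_add_iff 2).mpr this
    simpa [add_comm, add_assoc] using h
  have h2 : Summable (fun n : ℕ => 1 / ((n:ℝ)+1)^2) := by
    have := Real.summable_one_div_nat_pow.mpr (by norm_num : 1 < 2)
    simpa using (summable_nat_add_iff 1).mpr this
  have h2' : Summable (fun n : ℕ => 1 / ((n:ℝ)+2)^2) := by
    have := Real.summable_one_div_nat_pow.mpr (by norm_num : 1 < 2)
    have h := (summable_nat_add_iff 2).mpr this
    simpa [add_comm, add_assoc] using h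
  -- shifted sums
  have t3 : ∑' n : ℕ, 1 / ((n:ℝ)+2)^3 = zeta3 - 1 := by
    have := Summable.tsum_eq_zero_add h3
    simp only [Nat.cast_zero, zero_add] at this
    have h : (∑' n : ℕ, 1 / ((n:ℝ)+1+1)^3) = ∑' n : ℕ, 1 / ((n:ℝ)+2)^3 := by
      congr 1; ext n; push_cast; ring_nf
    rw [zeta3, this]
    set_option linter.unusedTactic false in
    push_cast at h ⊢
    rw [h]; norm_num
  have t2 : ∑' n : ℕ, 1 / ((n:ℝ)+2)^2
      = (∑' n : ℕ, 1 / ((n:ℝ)+1)^2) - 1 := by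
    have := Summable.tsum_eq_zero_add h2
    simp only [Nat.cast_zero, zero_add] at this
    have h : (∑' n : ℕ, 1 / ((n:ℝ)+1+1)^2) = ∑' n : ℕ, 1 / ((n:ℝ)+2)^2 := by
      congr 1; ext n; push_cast; ring_nf
    rw [this]
    set_option linter.unusedTactic false in
    push_cast at h ⊢
    rw [h]; norm_num
  calc -∑' t : ℕ, deriv (fun x : ℝ => ((x - 1) / (x * (x + 1))) ^ 2) (t + 1)
      = -∑' n : ℕ, -(2 / ((n:ℝ)+1)^3 + 8 / ((n:ℝ)+2)^3 - 4 / ((n:ℝ)+1)^2 + 4 / ((n:ℝ)+2)^2) := by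
        congr 1; exact tsum_congr fun n => deriv_R1 n
    _ = ∑' n : ℕ, (2 / ((n:ℝ)+1)^3 + 8 / ((n:ℝ)+2)^3 - 4 / ((n:ℝ)+1)^2 + 4 / ((n:ℝ)+2)^2) := by
        rw [tsum_neg]; ring
    _ = 10 * zeta3 - 12 := by
        have e : ∀ n : ℕ, 2 / ((n:ℝ)+1)^3 + 8 / ((n:ℝ)+2)^3 - 4 / ((n:ℝ)+1)^2 + 4 / ((n:ℝ)+2)^2
            = (2 * (1/((n:ℝ)+1)^3) + 8 * (1/((n:ℝ)+2)^3)) + (-4 * (1/((n:ℝ)+1)^2) + 4 * (1/((n:ℝ)+2)^2)) := by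
          intro n; ring
        rw [tsum_congr e, Summable.tsum_add (((h3.mul_left 2).add (h3'.mul_left 8))) (((h2.mul_left (-4)).add (h2'.mul_left 4))),
            Summable.tsum_add (h3.mul_left 2) (h3'.mul_left 8), Summable.tsum_add (h2.mul_left (-4)) (h2'.mul_left 4),
            tsum_mul_left, tsum_mul_left, tsum_mul_left, tsum_mul_left, t3, t2]
        rw [zeta3]; ring
end

section
/- For every positive integer n, the rational functions R_n(t) = (((t-1)···(t-n))/(t(t+1)···(t+n)))^2 and S_n(t) := s_n(t) R_n(t) with s_n(t) = 4(2n+1)(-2t^2+t+(2n+1)^2) satisfy the telescoping identity (n+1)^3 R_{n+1}(t) - (2n+1)(17n^2+17n+5) R_n(t) + n^3 R_{n-1}(t) = S_n(t+1) - S_n(t) for all t avoiding the poles. -/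
noncomputable def s (n : ℕ) (t : ℝ) : ℝ :=
  4 * (2 * n + 1) * (-2 * t ^ 2 + t + (2 * n + 1) ^ 2)

noncomputable def S (n : ℕ) (t : ℝ) : ℝ := s n t * R n t

open Finset

noncomputable def rootR (n : ℕ) (t : ℝ) : ℝ :=
  (∏ j ∈ Icc 1 n, (t - j)) / (∏ j ∈ range (n + 1), (t + j))

lemma R_eq_rootR_sq (n : ℕ) (t : ℝ) : R n t = rootR n t ^ 2 := rfl

lemma rootR_succ (n : ℕ) (t : ℝ) :
    rootR (n + 1) t = rootR n t * ((t - (n + 1)) / (t + (n + 1))) := by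
  rw [rootR, rootR, prod_Icc_succ_top (by omega), prod_range_succ, mul_div_mul_comm]
  push_cast
  rfl

lemma prod_Icc_add_one_sub (n : ℕ) (t : ℝ) :
    ∏ j ∈ Icc 1 (n + 1), (t + 1 - j) = t * ∏ j ∈ Icc 1 n, (t - j) := by
  induction n with
  | zero => simp
  | succ n ih =>
    rw [prod_Icc_succ_top (by omega), ih, prod_Icc_succ_top (by omega)]
    push_cast
    ring

lemma mul_prod_range_add_one_add (n : ℕ) (t : ℝ) :
    t * ∏ j ∈ range n, (t + 1 + j) = ∏ j ∈ range (n + 1), (t + j) := by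
  induction n with
  | zero => simp
  | succ n ih =>
    rw [prod_range_succ, ← mul_assoc, ih, prod_range_succ _ (n + 1)]
    push_cast
    ring

lemma rootR_succ_add_one (n : ℕ) {t : ℝ} (ht : t ≠ 0) :
    rootR (n + 1) (t + 1) = rootR n t * (t ^ 2 / ((t + (n + 1)) * (t + (n + 1 + 1)))) := by
  have hden : ∏ j ∈ range (n + 2), (t + 1 + j)
      = (∏ j ∈ range (n + 1), (t + j)) * ((t + (n + 1)) * (t + (n + 1 + 1))) / t := by
    rw [eq_div_iff ht, mul_comm, mul_prod_range_add_one_add, prod_range_succ, prod_range_succ]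
    push_cast
    ring
  rw [rootR, rootR, prod_Icc_add_one_sub, hden, div_div_eq_mul_div (t * _), div_mul_div_comm]
  congr 1
  ring

theorem telescoping_identity (n : ℕ) (hn : 0 < n) (t : ℝ)
    (ht : ∀ j : ℕ, j ≤ n + 1 → t + j ≠ 0) :
    ((n : ℝ) + 1) ^ 3 * R (n + 1) t
      - (2 * n + 1) * (17 * n ^ 2 + 17 * n + 5) * R n t
      + (n : ℝ) ^ 3 * R (n - 1) t
    = S n (t + 1) - S n t := by
  obtain ⟨m, rfl⟩ : ∃ m, n = m + 1 := ⟨n - 1, by omega⟩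
  have h0 : t ≠ 0 := by simpa using ht 0 (by omega)
  have h1 : t + (m + 1) ≠ 0 := by exact_mod_cast ht (m + 1) (by omega)
  have h2 : t + (m + 1 + 1) ≠ 0 := by exact_mod_cast ht (m + 2) (by omega)
  rw [S, S, Nat.add_sub_cancel, R_eq_rootR_sq, R_eq_rootR_sq, R_eq_rootR_sq, R_eq_rootR_sq,
    rootR_succ_add_one m h0, rootR_succ, rootR_succ, s, s]
  push_cast
  field_simp
  ring
end

section
/- For positive integers m and n, e^{-n} · (m+n)^{m+n-1} / m^{m-1} < m(m+1)···(m+n-1) < e^{-n} · (m+n)^{m+n} / m^m. -/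
open Real Finset

lemma key2 (a : ℝ) (ha : 0 < a) : a * Real.log (a+1) < a * Real.log a + 1 := by
  have h1 : (0:ℝ) < (a+1)/a := by positivity
  have h2 : (a+1)/a ≠ 1 := by
    intro h; field_simp at h; linarith
  have h := Real.log_lt_sub_one_of_pos h1 h2
  rw [Real.log_div (by positivity) (by positivity)] at h
  have : (a+1)/a - 1 = 1/a := by field_simp; ring
  rw [this] at h
  have := mul_lt_mul_of_pos_left h ha
  rw [mul_one_div, div_self ha.ne'] at this
  nlinarith

lemma key1 (a : ℝ) (ha : 0 < a) : (a+1) * Real.log a + 1 < (a+1) * Real.log (a+1) := by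
  have h1 : (0:ℝ) < a/(a+1) := by positivity
  have h2 : a/(a+1) ≠ 1 := by
    intro h; field_simp at h; linarith
  have h := Real.log_lt_sub_one_of_pos h1 h2
  rw [Real.log_div (by positivity) (by positivity)] at h
  have he : a/(a+1) - 1 = -(1/(a+1)) := by field_simp; ring
  rw [he] at h
  have ha1 : (0:ℝ) < a + 1 := by linarith
  have := mul_lt_mul_of_pos_left h ha1
  rw [mul_neg, mul_one_div, div_self ha1.ne'] at this
  nlinarith

lemma upper_sum (m : ℝ) (hm : 0 < m) (n : ℕ) (hn : 0 < n) :
    ∑ j ∈ range n, Real.log (m+j) < (m+n)*Real.log (m+n) - m*Real.log m - n := by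
  induction n with
  | zero => omega
  | succ k ih =>
    rcases Nat.eq_zero_or_pos k with hk | hk
    · subst hk
      have := key1 m hm
      norm_num [Finset.sum_range_one]
      nlinarith
    · have ihk := ih hk
      rw [Finset.sum_range_succ]
      have hmk : (0:ℝ) < m + k := by positivity
      have := key1 (m + k) hmk
      have hB : (m+(k:ℝ)+1)*Real.log (m+k) = (m+(k:ℝ))*Real.log (m+k) + Real.log (m+k) := by ring
      push_cast
      rw [show m + ((k:ℝ)+1) = m + (k:ℝ) + 1 from by ring]
      linarith

lemma lower_sum (m : ℝ) (hm : 0 < m) (n : ℕ) (hn : 0 < n) :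
    (m+n-1)*Real.log (m+n) - (m-1)*Real.log m - n < ∑ j ∈ range n, Real.log (m+j) := by
  induction n with
  | zero => omega
  | succ k ih =>
    rcases Nat.eq_zero_or_pos k with hk | hk
    · subst hk
      have := key2 m hm
      norm_num [Finset.sum_range_one]
      nlinarith
    · have ihk := ih hk
      rw [Finset.sum_range_succ]
      have hmk : (0:ℝ) < m + k := by positivity
      have := key2 (m + k) hmk
      have hB : (m+(k:ℝ)+1-1)*Real.log (m+k+1) = (m+(k:ℝ))*Real.log (m+k+1) := by ring
      push_cast
      rw [show m + ((k:ℝ)+1) = m + (k:ℝ) + 1 from by ring]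
      linarith

theorem rising_factorial_bounds (m n : ℕ) (hm : 0 < m) (hn : 0 < n) :
    Real.exp (-(n : ℝ)) * ((m : ℝ) + n) ^ (m + n - 1) / (m : ℝ) ^ (m - 1)
      < ∏ j ∈ Finset.range n, ((m : ℝ) + j) ∧
    ∏ j ∈ Finset.range n, ((m : ℝ) + j)
      < Real.exp (-(n : ℝ)) * ((m : ℝ) + n) ^ (m + n) / (m : ℝ) ^ m := by
  have hm' : (0:ℝ) < m := by exact_mod_cast hm
  have hmn : (0:ℝ) < (m:ℝ) + n := by positivity
  -- express powers and product as exponentials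
  have hpow : ∀ (x : ℝ), 0 < x → ∀ k : ℕ, x ^ k = Real.exp (k * Real.log x) := by
    intro x hx k
    rw [Real.exp_nat_mul, Real.exp_log hx]
  have hprod : ∏ j ∈ Finset.range n, ((m : ℝ) + j)
      = Real.exp (∑ j ∈ range n, Real.log ((m:ℝ)+j)) := by
    rw [Real.exp_sum]
    refine Finset.prod_congr rfl fun j _ => ?_
    rw [Real.exp_log (by positivity)]
  have hc1 : ((m + n - 1 : ℕ) : ℝ) = (m:ℝ) + n - 1 := by
    have : 1 ≤ m + n := by omega
    push_cast [this]; ring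
  have hc2 : ((m - 1 : ℕ) : ℝ) = (m:ℝ) - 1 := by
    push_cast [hm]; ring
  constructor
  · rw [hpow _ hmn, hpow _ hm', hprod, ← Real.exp_add, ← Real.exp_sub,
      Real.exp_lt_exp, hc1, hc2]
    have := lower_sum (m:ℝ) hm' n hn
    linarith
  · rw [hpow _ hmn, hpow _ hm', hprod, ← Real.exp_add, ← Real.exp_sub,
      Real.exp_lt_exp]
    have := upper_sum (m:ℝ) hm' n hn
    push_cast
    linarith
end

section
/- The unique real solution τ_0 > 1 of the equation τ^5(τ+2) = (τ-1)(τ+1)^5 is τ_0 = -1/2 + sqrt(5/4 + sqrt 2). -/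
/-!
Substituting `s = τ + 1/2` turns the sextic equation into `s · (2 s⁴ - 5 s² - 7/8) = 0`.
For `τ > 1` the factor `s` is positive, and the biquadratic factor has the roots
`s² = 5/4 ± √2`; only `s² = 5/4 + √2` is positive, so `s = √(5/4 + √2)`.
-/

open Real

lemma sextic_sub_eq (τ : ℝ) :
    τ ^ 5 * (τ + 2) - (τ - 1) * (τ + 1) ^ 5 =
      -((τ + 1 / 2) * (2 * (τ + 1 / 2) ^ 4 - 5 * (τ + 1 / 2) ^ 2 - 7 / 8)) := by
  ring

lemma biquadratic_eq_zero_iff (s : ℝ) :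
    2 * s ^ 4 - 5 * s ^ 2 - 7 / 8 = 0 ↔ s ^ 2 = 5 / 4 + √2 := by
  have h2 : √2 ^ 2 = 2 := sq_sqrt zero_le_two
  have hneg_root : 5 / 4 - √2 < s ^ 2 := by nlinarith [sq_nonneg s, sqrt_nonneg 2]
  have hfactor : 2 * s ^ 4 - 5 * s ^ 2 - 7 / 8 =
      2 * (s ^ 2 - (5 / 4 + √2)) * (s ^ 2 - (5 / 4 - √2)) := by
    linear_combination 2 * h2
  rw [hfactor, mul_eq_zero, mul_eq_zero, sub_eq_zero]
  constructor
  · rintro ((h | h) | h)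
    · norm_num at h
    · exact h
    · linarith
  · exact fun h => Or.inl (Or.inr h)

lemma sextic_eq_iff {τ : ℝ} (hτ : -1 / 2 < τ) :
    τ ^ 5 * (τ + 2) = (τ - 1) * (τ + 1) ^ 5 ↔ τ + 1 / 2 = √(5 / 4 + √2) := by
  have hs : 0 < τ + 1 / 2 := by linarith
  rw [← sub_eq_zero, sextic_sub_eq, neg_eq_zero, mul_eq_zero, or_iff_right hs.ne',
    biquadratic_eq_zero_iff, eq_comm (a := τ + 1 / 2), sqrt_eq_iff_eq_sq (by positivity) hs.le]
  exact eq_comm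

theorem tau0_unique_solution :
    let τ₀ : ℝ := -1 / 2 + Real.sqrt (5 / 4 + Real.sqrt 2)
    1 < τ₀ ∧ τ₀ ^ 5 * (τ₀ + 2) = (τ₀ - 1) * (τ₀ + 1) ^ 5 ∧
      ∀ τ : ℝ, 1 < τ → τ ^ 5 * (τ + 2) = (τ - 1) * (τ + 1) ^ 5 → τ = τ₀ := by
  intro τ₀
  have hroot : τ₀ + 1 / 2 = √(5 / 4 + √2) := by simp only [τ₀]; ring
  have hτ₀ : 1 < τ₀ := by
    have : 3 / 2 < √(5 / 4 + √2) := lt_sqrt_of_sq_lt (by nlinarith [one_lt_sqrt_two])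
    linarith
  refine ⟨hτ₀, (sextic_eq_iff (by linarith)).2 hroot, fun τ hτ h => ?_⟩
  have := (sextic_eq_iff (by linarith)).1 h
  linarith
end
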